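/- arXiv:1611.01470 — 3 statements merged into one kernel-verified Lean document; each statement's English description precedes it below -/
import Mathlib

section
/- Lemma (characterization of N(δ)): in a unital ring A with a chain of idempotents 0 = p₀ < p₁ < ... < pₙ < p_{n+1} = 1, an element g ∈ Δ(δ)ˣ (invertible element with (1-pⱼ)gpⱼ = 0 for j = 1,...,n) satisfies Φ_δ(g) = 1 if and only if (1-p_{j-1}) g pⱼ = (1-p_{j-1}) pⱼ for all j = 1,...,n+1. -/
/-!
Write `q j = p j - p (j - 1)` (`chainDiff p j`). The `q j`, `1 ≤ j ≤ n + 1`, are orthogonal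
idempotents summing to `1`, and `Phi n p x = ∑ q j * x * q j`; compressing by `q j` shows that
`Phi n p x = 1` exactly when every diagonal block `q j * x * q j` equals `q j`. For a block upper
triangular `g`, i.e. `g * p j = p j * g * p j`, the block `(1 - p (j - 1)) * g * p j` is that
diagonal block, because `g * p (j - 1)` only has components in the blocks that `1 - p (j - 1)`
annihilates.
-/

/-- The diagonal truncation associated with a chain of idempotents. -/
def Phi {A : Type*} [Ring A] (n : ℕ) (p : ℕ → A) (x : A) : A :=
  ∑ j ∈ Finset.Icc 1 (n + 1), (p j - p (j - 1)) * x * (p j - p (j - 1))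

section

variable {A : Type*} [Ring A]

def chainDiff (p : ℕ → A) (j : ℕ) : A := p j - p (j - 1)

theorem mul_eq_mul_mul_of_one_sub_mul_mul_eq_zero {e g : A} (h : (1 - e) * g * e = 0) :
    g * e = e * g * e := by
  rwa [sub_mul, one_mul, sub_mul, sub_eq_zero] at h

theorem one_sub_mul_mul_eq_sub_mul_mul_sub {e f g : A} (hef : e * f = e) (hfe : f * e = e)
    (he : e * e = e) (hgf : g * f = f * g * f) (hge : g * e = e * g * e) :
    (1 - e) * g * f = (f - e) * g * (f - e) := by
  have hfe0 : (f - e) * e = 0 := by rw [sub_mul, hfe, he, sub_self]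
  calc (1 - e) * g * f = (1 - e) * f * g * f := by rw [mul_assoc, hgf, ← mul_assoc, ← mul_assoc]
    _ = (f - e) * g * f - (f - e) * e * g * e := by
      rw [sub_mul, one_mul, hef, hfe0, zero_mul, zero_mul, sub_zero]
    _ = (f - e) * g * (f - e) := by rw [mul_sub, mul_assoc (f - e) g e, hge]; simp only [mul_assoc]

section Chain

variable {m : ℕ} {p : ℕ → A} (hp : ∀ j ≤ m, ∀ k ≤ m, p j * p k = p (min j k))
include hp

theorem chainDiff_mul_chainDiff {j k : ℕ} (hj : j ∈ Finset.Icc 1 m)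
    (hk : k ∈ Finset.Icc 1 m) :
    chainDiff p j * chainDiff p k = if j = k then chainDiff p j else 0 := by
  rw [Finset.mem_Icc] at hj hk
  simp only [chainDiff, sub_mul, mul_sub, hp j hj.2 k hk.2, hp j hj.2 (k - 1) (by omega),
    hp (j - 1) (by omega) k hk.2, hp (j - 1) (by omega) (k - 1) (by omega)]
  rcases lt_trichotomy j k with h | rfl | h
  · rw [if_neg h.ne, show min j k = min j (k - 1) by omega,
      show min (j - 1) k = min (j - 1) (k - 1) by omega]
    abel
  · rw [if_pos rfl, min_self, min_self, show min j (j - 1) = j - 1 by omega,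
      show min (j - 1) j = j - 1 by omega]
    abel
  · rw [if_neg h.ne', show min j k = min (j - 1) k by omega,
      show min j (k - 1) = min (j - 1) (k - 1) by omega]
    abel

theorem chainDiff_mul_self {j : ℕ} (hj : j ∈ Finset.Icc 1 m) :
    chainDiff p j * chainDiff p j = chainDiff p j := by
  rw [chainDiff_mul_chainDiff hp hj hj, if_pos rfl]

theorem one_sub_mul_eq_chainDiff {j : ℕ} (hj : j ∈ Finset.Icc 1 m) :
    (1 - p (j - 1)) * p j = chainDiff p j := by
  rw [Finset.mem_Icc] at hj
  rw [sub_mul, one_mul, hp (j - 1) (by omega) j hj.2, min_eq_left (Nat.sub_le j 1), chainDiff]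

theorem one_sub_mul_mul_eq_chainDiff_mul_mul {g : A} (hg : ∀ j ≤ m, g * p j = p j * g * p j)
    {j : ℕ} (hj : j ∈ Finset.Icc 1 m) :
    (1 - p (j - 1)) * g * p j = chainDiff p j * g * chainDiff p j := by
  rw [Finset.mem_Icc] at hj
  have hj' : j - 1 ≤ m := by omega
  refine one_sub_mul_mul_eq_sub_mul_mul_sub ?_ ?_ ?_ (hg j hj.2) (hg (j - 1) hj')
  · rw [hp _ hj' _ hj.2, min_eq_left (Nat.sub_le j 1)]
  · rw [hp _ hj.2 _ hj', min_eq_right (Nat.sub_le j 1)]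
  · rw [hp _ hj' _ hj', min_self]

end Chain

theorem Phi_eq_sum_chainDiff (n : ℕ) (p : ℕ → A) (x : A) :
    Phi n p x = ∑ j ∈ Finset.Icc 1 (n + 1), chainDiff p j * x * chainDiff p j :=
  rfl

theorem sum_chainDiff (p : ℕ → A) (n : ℕ) :
    ∑ j ∈ Finset.Icc 1 n, chainDiff p j = p n - p 0 := by
  induction n with
  | zero => simp
  | succ n ih =>
    rw [Finset.sum_Icc_succ_top (by omega), ih, chainDiff, Nat.add_sub_cancel]
    abel

section Phi

variable {n : ℕ} {p : ℕ → A} (hp : ∀ j ≤ n + 1, ∀ k ≤ n + 1, p j * p k = p (min j k))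
include hp

theorem chainDiff_mul_Phi_mul_chainDiff (x : A) {j : ℕ} (hj : j ∈ Finset.Icc 1 (n + 1)) :
    chainDiff p j * Phi n p x * chainDiff p j = chainDiff p j * x * chainDiff p j := by
  have hblock : ∀ i ∈ Finset.Icc 1 (n + 1),
      chainDiff p j * (chainDiff p i * x * chainDiff p i) * chainDiff p j
        = if i = j then chainDiff p j * x * chainDiff p j else 0 := by
    intro i hi
    simp only [← mul_assoc]
    rw [chainDiff_mul_chainDiff hp hj hi, mul_assoc _ (chainDiff p i),
      chainDiff_mul_chainDiff hp hi hj]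
    by_cases hij : i = j
    · subst hij
      rw [if_pos rfl, if_pos rfl]
    · rw [if_neg hij, if_neg (Ne.symm hij), if_neg hij, zero_mul, zero_mul]
  simp only [Phi_eq_sum_chainDiff, Finset.mul_sum, Finset.sum_mul]
  rw [Finset.sum_congr rfl hblock, Finset.sum_ite_eq' _ _, if_pos hj]

theorem Phi_eq_one_iff (h0 : p 0 = 0) (h1 : p (n + 1) = 1) (x : A) :
    Phi n p x = 1 ↔
      ∀ j ∈ Finset.Icc 1 (n + 1), chainDiff p j * x * chainDiff p j = chainDiff p j := by
  have hsum : ∑ j ∈ Finset.Icc 1 (n + 1), chainDiff p j = 1 := by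
    rw [sum_chainDiff, h0, h1, sub_zero]
  constructor
  · intro hx j hj
    rw [← chainDiff_mul_Phi_mul_chainDiff hp x hj, hx, mul_one, chainDiff_mul_self hp hj]
  · intro hx
    rw [Phi_eq_sum_chainDiff, ← hsum]
    exact Finset.sum_congr rfl hx

end Phi

end

theorem stmt7_general {A : Type*} [Ring A] (n : ℕ) (p : ℕ → A)
    (h0 : p 0 = 0) (h1 : p (n + 1) = 1)
    (hp : ∀ j ∈ Finset.Icc 0 (n + 1), ∀ k ∈ Finset.Icc 0 (n + 1),
      p j * p k = p (min j k))
    (u : Aˣ)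
    (hu : ∀ j ∈ Finset.Icc 1 n, (1 - p j) * (u : A) * p j = 0) :
    Phi n p (u : A) = 1 ↔
      ∀ j ∈ Finset.Icc 1 (n + 1),
        (1 - p (j - 1)) * (u : A) * p j = (1 - p (j - 1)) * p j := by
  have hchain : ∀ j ≤ n + 1, ∀ k ≤ n + 1, p j * p k = p (min j k) := fun j hj k hk =>
    hp j (Finset.mem_Icc.2 ⟨j.zero_le, hj⟩) k (Finset.mem_Icc.2 ⟨k.zero_le, hk⟩)
  have htri : ∀ j ≤ n + 1, (u : A) * p j = p j * u * p j := by
    intro j hj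
    rcases Nat.eq_zero_or_pos j with rfl | hpos
    · simp [h0]
    rcases hj.lt_or_eq with hlt | rfl
    · exact mul_eq_mul_mul_of_one_sub_mul_mul_eq_zero
        (hu j (Finset.mem_Icc.2 ⟨hpos, by omega⟩))
    · simp [h1]
  rw [Phi_eq_one_iff hchain h0 h1]
  refine forall₂_congr fun j hj => ?_
  rw [one_sub_mul_mul_eq_chainDiff_mul_mul hchain htri hj, one_sub_mul_eq_chainDiff hchain hj]

/-- Characterization of `N(δ)`: an element `g ∈ Δ(δ)ˣ` satisfies `Φ_δ(g) = 1` iff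
`(1 - p (j-1)) g (p j) = (1 - p (j-1)) (p j)` for all `j = 1, ..., n+1`. -/
theorem stmt7 {A : Type*} [Ring A] (n : ℕ) (p : ℕ → A)
    (h0 : p 0 = 0) (h1 : p (n + 1) = 1)
    (hp : ∀ j ∈ Finset.Icc 0 (n + 1), ∀ k ∈ Finset.Icc 0 (n + 1),
      p j * p k = p (min j k))
    (u : Aˣ)
    (hu : ∀ j ∈ Finset.Icc 1 n, (1 - p j) * (u : A) * p j = 0)
    (hu' : ∀ j ∈ Finset.Icc 1 n, (1 - p j) * ((u⁻¹ : Aˣ) : A) * p j = 0) :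
    Phi n p (u : A) = 1 ↔
      ∀ j ∈ Finset.Icc 1 (n + 1),
        (1 - p (j - 1)) * (u : A) * p j = (1 - p (j - 1)) * p j :=
  stmt7_general n p h0 h1 hp u hu
end

section
/- Lemma (kernel decomposition): in a unital ring with a chain of idempotents 0 = p₀ < p₁ < ... < pₙ < p_{n+1} = 1, every x with Φ_δ(x) = 0 decomposes uniquely as x = y + z, where y = Σ_{j=2}^{n+1} (1-p_{j-1}) pⱼ x p_{j-1} satisfies pⱼ y (1-p_{j-1}) = 0 for all j = 1,...,n+1, and z = Σ_{j=2}^{n+1} p_{j-1} x pⱼ (1-p_{j-1}) satisfies (1-p_{j-1}) z pⱼ = 0 for all j = 1,...,n+1. -/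
open Finset

theorem Finset.sum_Icc_succ_sub_pred {M : Type*} [AddCommGroup M] (f : ℕ → M) {m n : ℕ}
    (hmn : m ≤ n) : ∑ j ∈ Icc (m + 1) n, (f j - f (j - 1)) = f n - f m := by
  induction n, hmn using Nat.le_induction with
  | base => simp
  | succ k hmk ih => rw [sum_Icc_succ_top (by omega), ih, Nat.add_sub_cancel]; abel

theorem mul_mul_sub_mul_mul_eq_of_le {A : Type*} [Ring A] {a b : A} (hab : a * b = a)
    (hba : b * a = a) (x : A) :
    b * x * b - a * x * a =
      (1 - a) * b * x * a + a * x * b * (1 - a) + (b - a) * x * (b - a) := by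
  simp only [sub_mul, mul_sub, one_mul, mul_one, mul_assoc, hab, hba]
  abel

namespace IdempotentChain

variable {A : Type*} [Ring A] {n : ℕ} {p : ℕ → A}

def strictLowerPart (n : ℕ) (p : ℕ → A) (x : A) : A :=
  ∑ j ∈ Icc 2 (n + 1), (1 - p (j - 1)) * p j * x * p (j - 1)

def strictUpperPart (n : ℕ) (p : ℕ → A) (x : A) : A :=
  ∑ j ∈ Icc 2 (n + 1), p (j - 1) * x * p j * (1 - p (j - 1))

/-- `IsStrictLower n p` is the paper's `TN(δ̂)` and `IsStrictUpper n p` its `TN(δ)`. -/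
def IsStrictLower (n : ℕ) (p : ℕ → A) (y : A) : Prop :=
  ∀ j ∈ Icc 1 (n + 1), p j * y * (1 - p (j - 1)) = 0

def IsStrictUpper (n : ℕ) (p : ℕ → A) (z : A) : Prop :=
  ∀ j ∈ Icc 1 (n + 1), (1 - p (j - 1)) * z * p j = 0

theorem strictLowerPart_add (x y : A) :
    strictLowerPart n p (x + y) = strictLowerPart n p x + strictLowerPart n p y := by
  simp only [strictLowerPart, mul_add, add_mul, sum_add_distrib]

variable (hp : ∀ j ∈ Icc 0 (n + 1), ∀ k ∈ Icc 0 (n + 1), p j * p k = p (min j k))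
include hp

theorem mul_eq_left_of_le {j k : ℕ} (hjk : j ≤ k) (hk : k ≤ n + 1) : p j * p k = p j := by
  rw [hp j (by simp; omega) k (by simp; omega), min_eq_left hjk]

theorem mul_eq_right_of_le {j k : ℕ} (hjk : j ≤ k) (hk : k ≤ n + 1) : p k * p j = p j := by
  rw [hp k (by simp; omega) j (by simp; omega), min_eq_right hjk]

theorem mul_one_sub_eq_zero_of_le {j k : ℕ} (hjk : j ≤ k) (hk : k ≤ n + 1) :
    p j * (1 - p k) = 0 := by
  rw [mul_sub, mul_one, mul_eq_left_of_le hp hjk hk, sub_self]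

theorem one_sub_mul_eq_zero_of_le {j k : ℕ} (hjk : j ≤ k) (hk : k ≤ n + 1) :
    (1 - p k) * p j = 0 := by
  rw [sub_mul, one_mul, mul_eq_right_of_le hp hjk hk, sub_self]

theorem strictLowerPart_add_strictUpperPart_add_Phi (h0 : p 0 = 0) (h1 : p (n + 1) = 1)
    (x : A) : strictLowerPart n p x + strictUpperPart n p x + Phi n p x = x := by
  have hPhi : Phi n p x =
      p 1 * x * p 1 + ∑ j ∈ Icc 2 (n + 1), (p j - p (j - 1)) * x * (p j - p (j - 1)) := by
    rw [Phi, ← insert_Icc_add_one_left_eq_Icc (by omega), sum_insert (by simp)]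
    simp [h0]
  have hstep : ∀ j ∈ Icc 2 (n + 1),
      (1 - p (j - 1)) * p j * x * p (j - 1) + p (j - 1) * x * p j * (1 - p (j - 1))
        + (p j - p (j - 1)) * x * (p j - p (j - 1)) = p j * x * p j - p (j - 1) * x * p (j - 1) :=
    fun j hj => by
      simp only [mem_Icc] at hj
      exact (mul_mul_sub_mul_mul_eq_of_le (mul_eq_left_of_le hp (by omega) hj.2)
        (mul_eq_right_of_le hp (by omega) hj.2) x).symm
  rw [hPhi, strictLowerPart, strictUpperPart, ← sum_add_distrib, add_left_comm,
    ← sum_add_distrib, sum_congr rfl hstep, sum_Icc_succ_sub_pred (fun j => p j * x * p j)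
    (by omega : 1 ≤ n + 1), h1]
  simp

theorem strictLowerPart_isStrictLower (x : A) : IsStrictLower n p (strictLowerPart n p x) := by
  intro j hj
  simp only [mem_Icc] at hj
  rw [strictLowerPart, mul_sum, sum_mul]
  refine sum_eq_zero fun i hi => ?_
  simp only [mem_Icc] at hi
  rcases le_or_gt i j with hij | hij
  · simp only [mul_assoc, mul_one_sub_eq_zero_of_le hp (by omega : i - 1 ≤ j - 1) (by omega),
      mul_zero]
  · simp only [← mul_assoc, mul_one_sub_eq_zero_of_le hp (by omega : j ≤ i - 1) (by omega),
      zero_mul]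

theorem strictUpperPart_isStrictUpper (x : A) : IsStrictUpper n p (strictUpperPart n p x) := by
  intro j hj
  simp only [mem_Icc] at hj
  rw [strictUpperPart, mul_sum, sum_mul]
  refine sum_eq_zero fun i hi => ?_
  simp only [mem_Icc] at hi
  rcases le_or_gt i j with hij | hij
  · simp only [← mul_assoc, one_sub_mul_eq_zero_of_le hp (by omega : i - 1 ≤ j - 1) (by omega),
      zero_mul]
  · simp only [mul_assoc, one_sub_mul_eq_zero_of_le hp (by omega : j ≤ i - 1) (by omega),
      mul_zero]

theorem strictLowerPart_of_isStrictLower (h0 : p 0 = 0) (h1 : p (n + 1) = 1) {y : A}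
    (hy : IsStrictLower n p y) : strictLowerPart n p y = y := by
  have hstep : ∀ j ∈ Icc 2 (n + 1),
      (1 - p (j - 1)) * p j * y * p (j - 1) = p j * y - p (j - 1) * y :=
    fun j hj => by
      simp only [mem_Icc] at hj
      have hyj : p j * y = p j * y * p (j - 1) := by
        have := hy j (by simp; omega)
        rwa [mul_sub, mul_one, sub_eq_zero] at this
      calc (1 - p (j - 1)) * p j * y * p (j - 1)
          = (1 - p (j - 1)) * (p j * y) := by rw [hyj]; simp only [mul_assoc]
        _ = p j * y - p (j - 1) * p j * y := by rw [sub_mul, one_mul, mul_assoc]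
        _ = p j * y - p (j - 1) * y := by rw [mul_eq_left_of_le hp (by omega) hj.2]
  have hy1 : p 1 * y = 0 := by simpa [h0] using hy 1 (by simp)
  rw [strictLowerPart, sum_congr rfl hstep, sum_Icc_succ_sub_pred (fun j => p j * y)
    (by omega : 1 ≤ n + 1), h1, hy1, one_mul, sub_zero]

theorem strictLowerPart_eq_zero_of_isStrictUpper {z : A} (hz : IsStrictUpper n p z) :
    strictLowerPart n p z = 0 := by
  refine sum_eq_zero fun j hj => ?_
  simp only [mem_Icc] at hj
  have hzj : p (j - 1 - 1) * z * p (j - 1) = z * p (j - 1) := by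
    have := hz (j - 1) (by simp; omega)
    rwa [sub_mul, sub_mul, one_mul, sub_eq_zero, eq_comm] at this
  calc (1 - p (j - 1)) * p j * z * p (j - 1)
      = (1 - p (j - 1)) * p j * (p (j - 1 - 1) * z * p (j - 1)) := by
        rw [hzj]; simp only [mul_assoc]
    _ = (1 - p (j - 1)) * (p j * p (j - 1 - 1)) * (z * p (j - 1)) := by simp only [mul_assoc]
    _ = 0 := by
        rw [mul_eq_right_of_le hp (by omega) (by omega),
          one_sub_mul_eq_zero_of_le hp (by omega : j - 1 - 1 ≤ j - 1) (by omega), zero_mul]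

end IdempotentChain

open IdempotentChain

/-- Kernel decomposition: every `x ∈ ker Φ_δ` decomposes uniquely as `x = y + z` with
`y ∈ TN(δ̂)` and `z ∈ TN(δ)`, with the explicit formulas for `y` and `z`. -/
theorem stmt9 {A : Type*} [Ring A] (n : ℕ) (p : ℕ → A)
    (h0 : p 0 = 0) (h1 : p (n + 1) = 1)
    (hp : ∀ j ∈ Finset.Icc 0 (n + 1), ∀ k ∈ Finset.Icc 0 (n + 1),
      p j * p k = p (min j k))
    (x : A) (hx : Phi n p x = 0) :
    (x = (∑ j ∈ Finset.Icc 2 (n + 1), (1 - p (j - 1)) * p j * x * p (j - 1))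
       + (∑ j ∈ Finset.Icc 2 (n + 1), p (j - 1) * x * p j * (1 - p (j - 1)))) ∧
    (∀ j ∈ Finset.Icc 1 (n + 1),
      p j * (∑ i ∈ Finset.Icc 2 (n + 1), (1 - p (i - 1)) * p i * x * p (i - 1))
        * (1 - p (j - 1)) = 0) ∧
    (∀ j ∈ Finset.Icc 1 (n + 1),
      (1 - p (j - 1)) * (∑ i ∈ Finset.Icc 2 (n + 1), p (i - 1) * x * p i * (1 - p (i - 1)))
        * p j = 0) ∧
    (∀ y z : A,
      (∀ j ∈ Finset.Icc 1 (n + 1), p j * y * (1 - p (j - 1)) = 0) →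
      (∀ j ∈ Finset.Icc 1 (n + 1), (1 - p (j - 1)) * z * p j = 0) →
      x = y + z →
      y = (∑ j ∈ Finset.Icc 2 (n + 1), (1 - p (j - 1)) * p j * x * p (j - 1)) ∧
      z = (∑ j ∈ Finset.Icc 2 (n + 1), p (j - 1) * x * p j * (1 - p (j - 1)))) := by
  have hdecomp : x = strictLowerPart n p x + strictUpperPart n p x := by
    have := strictLowerPart_add_strictUpperPart_add_Phi hp h0 h1 x
    rwa [hx, add_zero, eq_comm] at this
  refine ⟨hdecomp, strictLowerPart_isStrictLower hp x, strictUpperPart_isStrictUpper hp x,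
    fun y z hy hz hxyz => ?_⟩
  have hyx : y = strictLowerPart n p x := by
    rw [hxyz, strictLowerPart_add, strictLowerPart_of_isStrictLower hp h0 h1 hy,
      strictLowerPart_eq_zero_of_isStrictUpper hp hz, add_zero]
  refine ⟨hyx, add_left_cancel (a := y) ?_⟩
  rw [← hxyz, hyx]
  exact hdecomp
end

section
/- With notation as above, x belongs to ker Φ_δ ∩ Δ(δ) if and only if (1-p_{j-1}) x pⱼ = 0 for all j = 1,...,n+1, i.e. ker Φ_δ ∩ Δ(δ) = TN(δ). -/
/-! For idempotents `f ≤ e` (i.e. `e * f = f`) the corner `(1 - f) x e` splits as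
`(1 - e) x e + (e - f) x (e - f) + (e - f) ((1 - f) x f)`, and conversely each of the three pieces
is obtained from `(1 - f) x e` by multiplying on the left or right. Taking `e = pⱼ`, `f = pⱼ₋₁`,
`(1 - pⱼ₋₁) x pⱼ = 0` is therefore equivalent to the two `Δ`-conditions at `j - 1` and `j` together
with the vanishing of the `j`-th diagonal block. Since the `pⱼ - pⱼ₋₁` are orthogonal idempotents,
`Φ x = 0` exactly when all diagonal blocks vanish. -/

theorem OrthogonalIdempotents.sum_mul_mul_self_eq_zero_iff {R I : Type*} [Semiring R]
    [Fintype I] {e : I → R} (he : OrthogonalIdempotents e) (x : R) :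
    ∑ i, e i * x * e i = 0 ↔ ∀ i, e i * x * e i = 0 := by
  classical
  refine ⟨fun h i => ?_, fun h => Finset.sum_eq_zero fun i _ => h i⟩
  have compress (k : I) : e i * (e k * x * e k) * e i = if i = k then e i * x * e i else 0 := by
    rw [show e i * (e k * x * e k) * e i = e i * e k * x * (e k * e i) by simp only [mul_assoc],
      he.mul_eq, he.mul_eq]
    rcases eq_or_ne i k with rfl | hik
    · simp
    · simp [hik, hik.symm]
  simpa [Finset.mul_sum, Finset.sum_mul, compress] using congrArg (e i * · * e i) h

theorem IsIdempotentElem.one_sub_mul_mul_eq_zero_iff {R : Type*} [Ring R] {e f : R}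
    (he : IsIdempotentElem e) (hf : IsIdempotentElem f) (hef : e * f = f) (x : R) :
    (1 - f) * x * e = 0 ↔
      (1 - f) * x * f = 0 ∧ (1 - e) * x * e = 0 ∧ (e - f) * x * (e - f) = 0 := by
  have h1 : (1 - e) * (1 - f) = 1 - e := by
    simp only [mul_sub, sub_mul, one_mul, mul_one, hef]; abel
  have h2 : (e - f) * (1 - f) = e - f := by
    simp only [mul_sub, sub_mul, mul_one, hef, hf.eq]; abel
  have h3 : e * (e - f) = e - f := by rw [mul_sub, he.eq, hef]
  constructor
  · intro h
    refine ⟨?_, ?_, ?_⟩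
    · calc (1 - f) * x * f = (1 - f) * x * e * f := by rw [mul_assoc _ e, hef]
        _ = 0 := by rw [h, zero_mul]
    · calc (1 - e) * x * e = (1 - e) * ((1 - f) * x * e) := by
            rw [← mul_assoc, ← mul_assoc, h1]
        _ = 0 := by rw [h, mul_zero]
    · calc (e - f) * x * (e - f) = (e - f) * (1 - f) * x * (e * (e - f)) := by rw [h2, h3]
        _ = (e - f) * ((1 - f) * x * e) * (e - f) := by simp only [mul_assoc]
        _ = 0 := by rw [h, mul_zero, zero_mul]
  · rintro ⟨hf', he', hef'⟩
    calc (1 - f) * x * e = (1 - e) * x * e + (e - f) * x * (e - f) + (e - f) * x * f := by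
          noncomm_ring
      _ = (1 - e) * x * e + (e - f) * x * (e - f) + (e - f) * ((1 - f) * x * f) := by
          rw [← mul_assoc, ← mul_assoc, h2]
      _ = 0 := by rw [he', hef', hf', mul_zero, add_zero, add_zero]

def IsIdempotentChain {A : Type*} [Mul A] (n : ℕ) (p : ℕ → A) : Prop :=
  ∀ j ≤ n + 1, ∀ k ≤ n + 1, p j * p k = p (min j k)

namespace IsIdempotentChain

variable {A : Type*} {n j k : ℕ} {p : ℕ → A}

section Mul

variable [Mul A]

theorem mul_of_le (hp : IsIdempotentChain n p) (hjk : j ≤ k) (hk : k ≤ n + 1) :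
    p j * p k = p j := by
  rw [hp j (hjk.trans hk) k hk, min_eq_left hjk]

theorem mul_of_ge (hp : IsIdempotentChain n p) (hjk : j ≤ k) (hk : k ≤ n + 1) :
    p k * p j = p j := by
  rw [hp k hk j (hjk.trans hk), min_eq_right hjk]

theorem isIdempotentElem (hp : IsIdempotentChain n p) (hj : j ≤ n + 1) :
    IsIdempotentElem (p j) :=
  hp.mul_of_le le_rfl hj

end Mul

variable [Ring A]

theorem sub_pred_mul_sub_pred_of_lt (hp : IsIdempotentChain n p) (hjk : j < k)
    (hk : k ≤ n + 1) : (p j - p (j - 1)) * (p k - p (k - 1)) = 0 := by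
  rw [sub_mul, mul_sub, mul_sub, hp.mul_of_le (by omega) hk, hp.mul_of_le (by omega) (by omega),
    hp.mul_of_le (by omega) hk, hp.mul_of_le (by omega) (by omega), sub_self, sub_self, sub_zero]

theorem sub_pred_mul_sub_pred_of_gt (hp : IsIdempotentChain n p) (hjk : j < k)
    (hk : k ≤ n + 1) : (p k - p (k - 1)) * (p j - p (j - 1)) = 0 := by
  rw [sub_mul, mul_sub, mul_sub, hp.mul_of_ge (by omega) hk, hp.mul_of_ge (by omega) hk,
    hp.mul_of_ge (by omega) (by omega), hp.mul_of_ge (by omega) (by omega), sub_self]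

theorem orthogonalIdempotents (hp : IsIdempotentChain n p) :
    OrthogonalIdempotents fun j : Finset.Icc 1 (n + 1) => p j - p (j - 1) where
  idem j := by
    have hj := (Finset.mem_Icc.mp j.2).2
    exact (hp.isIdempotentElem (by omega)).sub (hp.isIdempotentElem hj)
      (hp.mul_of_le (by omega) hj) (hp.mul_of_ge (by omega) hj)
  ortho := by
    rintro ⟨j, hj⟩ ⟨k, hk⟩ hne
    rw [Finset.mem_Icc] at hj hk
    rcases Nat.lt_or_gt_of_ne (Subtype.coe_ne_coe.mpr hne) with hjk | hkj
    · exact hp.sub_pred_mul_sub_pred_of_lt hjk hk.2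
    · exact hp.sub_pred_mul_sub_pred_of_gt hkj hj.2

theorem phi_eq_zero_iff (hp : IsIdempotentChain n p) (x : A) :
    Phi n p x = 0 ↔
      ∀ j ∈ Finset.Icc 1 (n + 1), (p j - p (j - 1)) * x * (p j - p (j - 1)) = 0 := by
  rw [Phi, ← Finset.sum_coe_sort, hp.orthogonalIdempotents.sum_mul_mul_self_eq_zero_iff,
    Subtype.forall]

theorem one_sub_pred_mul_mul_eq_zero_iff (hp : IsIdempotentChain n p) (hj : j ≤ n + 1)
    (x : A) :
    (1 - p (j - 1)) * x * p j = 0 ↔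
      (1 - p (j - 1)) * x * p (j - 1) = 0 ∧ (1 - p j) * x * p j = 0 ∧
        (p j - p (j - 1)) * x * (p j - p (j - 1)) = 0 :=
  (hp.isIdempotentElem hj).one_sub_mul_mul_eq_zero_iff (hp.isIdempotentElem (by omega))
    (hp.mul_of_ge (by omega) hj) x

end IsIdempotentChain

/-- `ker Φ_δ ∩ Δ(δ) = TN(δ)`. -/
theorem stmt10 {A : Type*} [Ring A] (n : ℕ) (p : ℕ → A)
    (h0 : p 0 = 0) (h1 : p (n + 1) = 1)
    (hp : ∀ j ∈ Finset.Icc 0 (n + 1), ∀ k ∈ Finset.Icc 0 (n + 1),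
      p j * p k = p (min j k)) (x : A) :
    (Phi n p x = 0 ∧ ∀ j ∈ Finset.Icc 1 n, (1 - p j) * x * p j = 0) ↔
      ∀ j ∈ Finset.Icc 1 (n + 1), (1 - p (j - 1)) * x * p j = 0 := by
  have hchain : IsIdempotentChain n p := fun j hj k hk =>
    hp j (Finset.mem_Icc.mpr ⟨j.zero_le, hj⟩) k (Finset.mem_Icc.mpr ⟨k.zero_le, hk⟩)
  rw [hchain.phi_eq_zero_iff]
  constructor
  · rintro ⟨hdiag, hcorner⟩ j hj
    have hcorner' (m : ℕ) (hm : m ≤ n + 1) : (1 - p m) * x * p m = 0 := by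
      rcases Nat.eq_zero_or_pos m with rfl | hm0
      · rw [h0, mul_zero]
      rcases hm.lt_or_eq with hmn | rfl
      · exact hcorner m (Finset.mem_Icc.mpr ⟨hm0, by omega⟩)
      · rw [h1, sub_self, zero_mul, zero_mul]
    have hjn := (Finset.mem_Icc.mp hj).2
    exact (hchain.one_sub_pred_mul_mul_eq_zero_iff hjn x).mpr
      ⟨hcorner' (j - 1) (by omega), hcorner' j hjn, hdiag j hj⟩
  · intro htn
    refine ⟨fun j hj => ?_, fun j hj => ?_⟩
    · exact ((hchain.one_sub_pred_mul_mul_eq_zero_iff (Finset.mem_Icc.mp hj).2 x).mp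
        (htn j hj)).2.2
    · have hj' : j ∈ Finset.Icc 1 (n + 1) := Finset.Icc_subset_Icc_right n.le_succ hj
      exact ((hchain.one_sub_pred_mul_mul_eq_zero_iff (Finset.mem_Icc.mp hj').2 x).mp
        (htn j hj')).2.1
end
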